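/- Let F be a field of characteristic ≠ 2 and let a, b ∈ M₂(F) be traceless matrices that are linearly independent over F. Suppose λ₁, λ₂ ∈ F satisfy λ₁·a + λ₂·b + a×b = 0. Then λ₁λ₂ = a·b, λ₂² = −det(a), and λ₁² = −det(b). -/
import Mathlib


open Matrix

/-- The inner product of traceless 2×2 matrices: `a·b = -(1/2) tr(ab)`. -/
noncomputable def matInner {F : Type*} [Field F] (a b : Matrix (Fin 2) (Fin 2) F) : F :=
  -((2 : F)⁻¹ * (a * b).trace)

/-- The cross product of traceless 2×2 matrices: `a×b = (ab - ba)/2`. -/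
noncomputable def matCross {F : Type*} [Field F] (a b : Matrix (Fin 2) (Fin 2) F) :
    Matrix (Fin 2) (Fin 2) F :=
  (2 : F)⁻¹ • (a * b - b * a)

lemma traceless_sq {F : Type*} [Field F] (a : Matrix (Fin 2) (Fin 2) F)
    (ha : a.trace = 0) : a * a = (-a.det) • (1 : Matrix (Fin 2) (Fin 2) F) := by
  rw [Matrix.trace_fin_two] at ha
  have hw : a 1 1 = -(a 0 0) := eq_neg_of_add_eq_zero_left (by rwa [add_comm] at ha)
  ext i j
  fin_cases i <;> fin_cases j <;>
    simp [Matrix.mul_apply, Fin.sum_univ_two, Matrix.det_fin_two, hw, Matrix.one_apply] <;>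
    ring

lemma traceless_anticomm {F : Type*} [Field F] (a b : Matrix (Fin 2) (Fin 2) F)
    (ha : a.trace = 0) (hb : b.trace = 0) :
    a * b + b * a = ((a * b).trace) • (1 : Matrix (Fin 2) (Fin 2) F) := by
  rw [Matrix.trace_fin_two] at ha hb
  have hwa : a 1 1 = -(a 0 0) := eq_neg_of_add_eq_zero_left (by rwa [add_comm] at ha)
  have hwb : b 1 1 = -(b 0 0) := eq_neg_of_add_eq_zero_left (by rwa [add_comm] at hb)
  ext i j
  fin_cases i <;> fin_cases j <;>
    simp [Matrix.mul_apply, Matrix.trace_fin_two, Fin.sum_univ_two, hwa, hwb,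
      Matrix.one_apply] <;>
    ring

/-- if traceless, linearly independent `a, b` satisfy
`λ₁a + λ₂b + a×b = 0` then `λ₁λ₂ = a·b`, `λ₂² = −det a` and `λ₁² = −det b`. -/
theorem stmt14 {F : Type*} [Field F] (h2 : (2 : F) ≠ 0)
    (a b : Matrix (Fin 2) (Fin 2) F) (ha : a.trace = 0) (hb : b.trace = 0)
    (hli : LinearIndependent F ![a, b]) (l₁ l₂ : F)
    (hrel : l₁ • a + l₂ • b + matCross a b = 0) :
    l₁ * l₂ = matInner a b ∧ l₂ ^ 2 = -a.det ∧ l₁ ^ 2 = -b.det := by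
  set p : F := matInner a b with hp
  have hsa : a * a = (-a.det) • (1 : Matrix (Fin 2) (Fin 2) F) := traceless_sq a ha
  have hsb : b * b = (-b.det) • (1 : Matrix (Fin 2) (Fin 2) F) := traceless_sq b hb
  have hsum := traceless_anticomm a b ha hb
  have hcross : matCross a b = -(l₁ • a + l₂ • b) := eq_neg_of_add_eq_zero_left (by rwa [add_comm] at hrel)
  have h2' : (2 : F)⁻¹ * 2 = 1 := inv_mul_cancel₀ h2
  have hab : a * b = (-l₁) • a + (-l₂) • b + (-p) • (1 : Matrix (Fin 2) (Fin 2) F) := by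
    have hsplit : a * b = (2 : F)⁻¹ • (a * b + b * a) + matCross a b := by
      simp only [matCross]
      rw [← smul_add]
      have hx : a * b + b * a + (a * b - b * a) = (2 : F) • (a * b) := by module
      rw [hx, smul_smul, h2', one_smul]
    rw [hsplit, hsum, hcross, hp]
    simp only [matInner]
    module
  -- multiply on the left by a
  have key1 : (l₂ * l₁ - p) • a + (l₂ ^ 2 + a.det) • b
      + (l₁ * a.det + l₂ * p) • (1 : Matrix (Fin 2) (Fin 2) F) = 0 := by
    have e : a * (a * b)
        = (-l₁) • ((-a.det) • (1 : Matrix (Fin 2) (Fin 2) F))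
          + (-l₂) • ((-l₁) • a + (-l₂) • b + (-p) • (1 : Matrix (Fin 2) (Fin 2) F))
          + (-p) • a := by
      calc a * (a * b) = a * ((-l₁) • a + (-l₂) • b + (-p) • 1) := by rw [← hab]
        _ = (-l₁) • (a * a) + (-l₂) • (a * b) + (-p) • a := by
            simp [mul_add, mul_smul_comm]
        _ = _ := by rw [hsa, hab]
    have e2 : a * (a * b) = (-a.det) • b := by
      rw [← mul_assoc, hsa, smul_mul_assoc, one_mul]
    have goal_eq : (l₂ * l₁ - p) • a + (l₂ ^ 2 + a.det) • b
        + (l₁ * a.det + l₂ * p) • (1 : Matrix (Fin 2) (Fin 2) F)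
        = ((-l₁) • ((-a.det) • (1 : Matrix (Fin 2) (Fin 2) F))
          + (-l₂) • ((-l₁) • a + (-l₂) • b + (-p) • (1 : Matrix (Fin 2) (Fin 2) F))
          + (-p) • a) - (-a.det) • b := by module
    rw [goal_eq, ← e, e2, sub_self]
  -- multiply on the right by b
  have key2 : (l₁ ^ 2 + b.det) • a + (l₁ * l₂ - p) • b
      + (l₁ * p + l₂ * b.det) • (1 : Matrix (Fin 2) (Fin 2) F) = 0 := by
    have e : (a * b) * b
        = (-l₁) • ((-l₁) • a + (-l₂) • b + (-p) • (1 : Matrix (Fin 2) (Fin 2) F))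
          + (-l₂) • ((-b.det) • (1 : Matrix (Fin 2) (Fin 2) F))
          + (-p) • b := by
      calc (a * b) * b = ((-l₁) • a + (-l₂) • b + (-p) • 1) * b := by rw [← hab]
        _ = (-l₁) • (a * b) + (-l₂) • (b * b) + (-p) • b := by
            simp [add_mul, smul_mul_assoc]
        _ = _ := by rw [hsb, hab]
    have e2 : (a * b) * b = (-b.det) • a := by
      rw [mul_assoc, hsb, mul_smul_comm, mul_one]
    have goal_eq : (l₁ ^ 2 + b.det) • a + (l₁ * l₂ - p) • b
        + (l₁ * p + l₂ * b.det) • (1 : Matrix (Fin 2) (Fin 2) F)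
        = ((-l₁) • ((-l₁) • a + (-l₂) • b + (-p) • (1 : Matrix (Fin 2) (Fin 2) F))
          + (-l₂) • ((-b.det) • (1 : Matrix (Fin 2) (Fin 2) F))
          + (-p) • b) - (-b.det) • a := by module
    rw [goal_eq, ← e, e2, sub_self]
  -- take traces to kill the identity component
  have tr1 : l₁ * a.det + l₂ * p = 0 := by
    have := congrArg Matrix.trace key1
    simp [Matrix.trace_add, Matrix.trace_smul, ha, hb, Matrix.trace_one] at this
    rcases this with h | h
    · exact h
    · exact absurd h h2
  have tr2 : l₁ * p + l₂ * b.det = 0 := by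
    have := congrArg Matrix.trace key2
    simp [Matrix.trace_add, Matrix.trace_smul, ha, hb, Matrix.trace_one] at this
    rcases this with h | h
    · exact h
    · exact absurd h h2
  rw [tr1, zero_smul, add_zero] at key1
  rw [tr2, zero_smul, add_zero] at key2
  have hpair := LinearIndependent.pair_iff.mp hli
  obtain ⟨c1, c2⟩ := hpair _ _ key1
  obtain ⟨c3, c4⟩ := hpair _ _ key2
  refine ⟨?_, ?_, ?_⟩
  · have : l₂ * l₁ = p := by linear_combination c1
    linear_combination this + (mul_comm l₁ l₂)
  · linear_combination c2
  · linear_combination c3
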